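/- arXiv:2110.12453 — 3 statements merged into one kernel-verified Lean document; each statement's English description precedes it below -/
import Mathlib

section
/- A bounded linear operator S on L²(𝕋) commutes with M_{z²} if and only if there exist φ_1, φ_2 ∈ L^∞(𝕋) such that Sf = φ_1 f^e + φ_2 f^o for all f ∈ L²(𝕋), where f^e(z) = (f(z)+f(−z))/2 and f^o(z) = (f(z)−f(−z))/2. -/
open MeasureTheory Complex
open scoped Real

noncomputable section

instance : Fact (0 < 2 * Real.pi) := ⟨by positivity⟩

/-- The circle group, modeled as `ℝ / 2πℤ`. -/
abbrev UnitCircle := AddCircle (2 * Real.pi)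

/-- Normalized Lebesgue (Haar) measure on the circle. -/
abbrev hm : Measure UnitCircle := AddCircle.haarAddCircle

/-- `L²(𝕋)`. -/
abbrev L2T := Lp ℂ 2 hm

/-- The coordinate function `z` on the circle. -/
def zz : UnitCircle → ℂ := fun x => fourier 1 x

/-- The Hardy space `H²` inside `L²(𝕋)`: the closed span of `{z^n : n ≥ 0}`. -/
def Hardy : Submodule ℂ L2T :=
  (Submodule.span ℂ (Set.range fun n : ℕ => fourierLp 2 (n : ℤ))).topologicalClosure

/-- even part `f^e(z) = (f(z)+f(-z))/2` (`-z` corresponds to `x + π`). -/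
def evenPart (g : UnitCircle → ℂ) : UnitCircle → ℂ :=
  fun x => (g x + g (x + ((Real.pi : ℝ) : UnitCircle))) / 2

/-- odd part `f^o(z) = (f(z)-f(-z))/2`. -/
def oddPart (g : UnitCircle → ℂ) : UnitCircle → ℂ :=
  fun x => (g x - g (x + ((Real.pi : ℝ) : UnitCircle))) / 2

/-- A conjugation on `L²(𝕋)`: an antilinear involutive map with `⟪Cf, Cg⟫ = ⟪g, f⟫`. -/
structure IsConjugation (C : L2T → L2T) : Prop where
  map_add : ∀ f g, C (f + g) = C f + C g
  map_smul : ∀ (c : ℂ) (f), C (c • f) = (starRingEnd ℂ) c • C f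
  involutive : ∀ f, C (C f) = f
  inner_eq : ∀ f g, (inner ℂ (C f) (C g) : ℂ) = inner ℂ g f

/-- the subspace `θ^k · S` of `L²(𝕋)` (given as the span of the set of elements
a.e. equal to `θ^k f` with `f ∈ S`; this set is already a subspace). -/
def mulSub (θ : UnitCircle → ℂ) (k : ℤ) (S : Submodule ℂ L2T) : Submodule ℂ L2T :=
  Submodule.span ℂ {g : L2T | ∃ f ∈ S,
    (g : UnitCircle → ℂ) =ᵐ[hm] fun x => θ x ^ k * (f : UnitCircle → ℂ) x}

/-- `θ` is inner: `θ ∈ L²` with `|θ| = 1` a.e. and `θ ∈ H²`. -/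
def IsInner (θ : UnitCircle → ℂ) : Prop :=
  ∃ hθ : MemLp θ 2 hm, (∀ᵐ x ∂hm, ‖θ x‖ = 1) ∧ hθ.toLp θ ∈ Hardy

/-- The model space `K_θ = H² ⊖ θH²`. -/
def modelSpace (θ : UnitCircle → ℂ) : Submodule ℂ L2T :=
  Hardy ⊓ (mulSub θ 1 Hardy)ᗮ

/-- The operator `M_{[φ₁,φ₂]}` applied to a function: `φ₁ g^e + φ₂ g^o`. -/
def mul2 (φ1 φ2 g : UnitCircle → ℂ) : UnitCircle → ℂ :=
  fun x => φ1 x * evenPart g x + φ2 x * oddPart g x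

/-- `J* f (z) = conj (f (z̄))`; `z̄` corresponds to `-x`. -/
def jstar (f : UnitCircle → ℂ) : UnitCircle → ℂ :=
  fun y => (starRingEnd ℂ) (f (-y))

/-- Finite Blaschke product with zeros `lam 0, …, lam (n-1)`. -/
def blaschke (n : ℕ) (lam : Fin n → ℂ) : UnitCircle → ℂ :=
  fun x => ∏ k, (lam k - zz x) / (1 - (starRingEnd ℂ) (lam k) * zz x)

/-- The standard basis functions `e_j` of the model space `K_B`. -/
def blaschkeBasis (n : ℕ) (lam : Fin n → ℂ) (j : Fin n) : UnitCircle → ℂ :=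
  fun x => (∏ k ∈ Finset.univ.filter (fun k : Fin n => (k : ℕ) < (j : ℕ)),
      (lam k - zz x) / (1 - (starRingEnd ℂ) (lam k) * zz x)) *
    ((Real.sqrt (1 - ‖lam j‖ ^ 2) : ℂ) / (1 - (starRingEnd ℂ) (lam j) * zz x))

/-! If `S` commutes with `M_{z²}` then `S (z^(n+2)) = z² S (z^n)`, so the symbol `z^(-n) S (z^n)`
depends only on the parity of `n`; call the two symbols `φ₁` and `φ₂`. Then `S` agrees with
`f ↦ φ₁ f^e + φ₂ f^o` on every `z^n`, and the set where the two agree is a closed subspace (the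
right-hand side only involves `f(x)` and `f(x + π)`, so it passes to a.e. convergent
subsequences), hence all of `L²`. Applying `S` to `1_B` and `z 1_B` for a `π`-invariant set `B`
gives `∫_B |φᵢ|² ≤ ‖S‖² |B|`, which forces `φᵢ ∈ L^∞`. Conversely, `z²` is even, so multiplying
by it commutes with taking even and odd parts. -/

namespace Mz2Commutant

open Filter
open scoped ENNReal NNReal

local notation "halfTurn" => ((Real.pi : ℝ) : UnitCircle)

section Measure

variable {α E : Type*} [MeasurableSpace α] [NormedAddCommGroup E] {μ : Measure α}

lemma ae_eq_emod_two {β : Type*} {ψ : ℤ → α → β} (h : ∀ n, ψ (n + 2) =ᵐ[μ] ψ n) (n : ℤ) :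
    ψ n =ᵐ[μ] ψ (n % 2) := by
  have key : ∀ r k : ℤ, ψ (r + 2 * k) =ᵐ[μ] ψ r := by
    intro r k
    induction k using Int.induction_on with
    | zero => simp
    | succ k ih =>
      rw [show r + 2 * (k + 1) = r + 2 * k + 2 by ring]
      exact (h _).trans ih
    | pred k ih =>
      have hk := h (r + 2 * (-k - 1))
      rw [show r + 2 * (-k - 1) + 2 = r + 2 * -k by ring] at hk
      exact hk.symm.trans ih
  conv_lhs => rw [← Int.emod_add_mul_ediv n 2]
  exact key _ _

lemma lintegral_enorm_sq_eq_eLpNorm_sq (f : α → E) :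
    ∫⁻ x, ‖f x‖ₑ ^ 2 ∂μ = eLpNorm f 2 μ ^ 2 := by
  simpa using (eLpNorm_nnreal_pow_eq_lintegral (f := f) (μ := μ) (p := 2) two_ne_zero).symm

lemma setLIntegral_enorm_sq_le_of_ae_eq_mul (S : Lp ℂ 2 μ →L[ℂ] Lp ℂ 2 μ) {φ g : α → ℂ}
    (hg : MemLp g 2 μ) (hS : ⇑(S (hg.toLp g)) =ᵐ[μ] φ * g) {A : Set α} (hA : MeasurableSet A)
    (hgA : ∀ x ∈ A, ‖g x‖ = 1) :
    ∫⁻ x in A, ‖φ x‖ₑ ^ 2 ∂μ ≤ ‖S‖ₑ ^ 2 * ∫⁻ x, ‖g x‖ₑ ^ 2 ∂μ := by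
  calc ∫⁻ x in A, ‖φ x‖ₑ ^ 2 ∂μ = ∫⁻ x in A, ‖φ x * g x‖ₑ ^ 2 ∂μ :=
        setLIntegral_congr_fun hA fun x hx => by
          rw [enorm_mul, ← ofReal_norm (g x), hgA x hx, ENNReal.ofReal_one, mul_one]
    _ ≤ ∫⁻ x, ‖φ x * g x‖ₑ ^ 2 ∂μ := setLIntegral_le_lintegral _ _
    _ = ‖S (hg.toLp g)‖ₑ ^ 2 := by
        rw [Lp.enorm_def, ← lintegral_enorm_sq_eq_eLpNorm_sq]
        exact lintegral_congr_ae (hS.mono fun x hx => by simp only [hx, Pi.mul_apply])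
    _ ≤ (‖S‖ₑ * ‖hg.toLp g‖ₑ) ^ 2 := by gcongr; exact S.le_opENorm _
    _ = ‖S‖ₑ ^ 2 * ∫⁻ x, ‖g x‖ₑ ^ 2 ∂μ := by
        rw [mul_pow, Lp.enorm_def, eLpNorm_congr_ae hg.coeFn_toLp,
          lintegral_enorm_sq_eq_eLpNorm_sq]

lemma memLp_top_of_setLIntegral_enorm_sq_le [SigmaFinite μ] {φ : α → E}
    (hφ : AEStronglyMeasurable φ μ) (C : ℝ≥0)
    (h : ∀ A, MeasurableSet A → ∫⁻ x in A, ‖φ x‖ₑ ^ 2 ∂μ ≤ C * μ A) : MemLp φ ∞ μ := by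
  have hle : (fun x => ‖φ x‖ₑ ^ 2) ≤ᵐ[μ] fun _ => (C : ℝ≥0∞) :=
    ae_le_of_forall_setLIntegral_le_of_sigmaFinite₀ (hφ.enorm.pow_const 2)
      fun A hA _ => by rw [setLIntegral_const]; exact h A hA
  refine memLp_top_of_bound hφ (NNReal.sqrt C) (hle.mono fun x hx => ?_)
  have hx : (‖φ x‖₊ : ℝ≥0∞) ^ 2 ≤ C := hx
  rw [← coe_nnnorm, NNReal.coe_le_coe, NNReal.le_sqrt_iff_sq_le]
  exact_mod_cast hx

end Measure

lemma norm_fourier_apply {T : ℝ} (n : ℤ) (x : AddCircle T) : ‖fourier n x‖ = 1 :=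
  Circle.norm_coe _

lemma zz_sq (x : UnitCircle) : zz x ^ 2 = fourier 2 x := by
  rw [zz, sq, ← fourier_add]; rfl

lemma halfTurn_add_halfTurn : halfTurn + halfTurn = 0 := by
  rw [← AddCircle.coe_add, ← two_mul, AddCircle.coe_period]

lemma fourier_add_halfTurn (n : ℤ) (x : UnitCircle) :
    fourier n (x + halfTurn) = (-1) ^ n * fourier n x := by
  have h := fourier_add_half_inv_index one_ne_zero Real.two_pi_pos (0 : UnitCircle)
  rw [zero_add, fourier_eval_zero, Int.cast_one, div_one,
    mul_div_cancel_left₀ _ two_ne_zero] at h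
  simp only [fourier_apply, one_zsmul] at h
  simp only [fourier_apply, smul_add, AddCircle.toCircle_add, AddCircle.toCircle_zsmul,
    Circle.coe_mul, Circle.coe_zpow, h, mul_comm]

lemma ae_add_halfTurn {P : UnitCircle → Prop} (h : ∀ᵐ x ∂hm, P x) :
    ∀ᵐ x ∂hm, P (x + halfTurn) :=
  (measurePreserving_add_right hm halfTurn).quasiMeasurePreserving.ae h

lemma exists_halfTurn_invariant_superset {A : Set UnitCircle} (hA : MeasurableSet A) :
    ∃ B, A ⊆ B ∧ MeasurableSet B ∧ (∀ x, x + halfTurn ∈ B ↔ x ∈ B) ∧ hm B ≤ 2 * hm A := by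
  refine ⟨A ∪ (· + halfTurn) ⁻¹' A, Set.subset_union_left,
    hA.union (measurable_add_const _ hA), fun x => ?_, ?_⟩
  · rw [Set.mem_union, Set.mem_union, Set.mem_preimage, Set.mem_preimage, add_assoc,
      halfTurn_add_halfTurn, add_zero, or_comm]
  · calc hm (A ∪ (· + halfTurn) ⁻¹' A) ≤ hm A + hm ((· + halfTurn) ⁻¹' A) :=
          measure_union_le _ _
      _ = 2 * hm A := by
        rw [(measurePreserving_add_right hm halfTurn).measure_preimage hA.nullMeasurableSet]
        exact (two_mul _).symm

section Mul2

variable (φ1 φ2 : UnitCircle → ℂ)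

lemma mul2_congr {g g' : UnitCircle → ℂ} (h : g =ᵐ[hm] g') :
    mul2 φ1 φ2 g =ᵐ[hm] mul2 φ1 φ2 g' := by
  filter_upwards [h, ae_add_halfTurn h] with x h1 h2
  simp only [mul2, evenPart, oddPart, h1, h2]

lemma mul2_add (g h : UnitCircle → ℂ) : mul2 φ1 φ2 (g + h) = mul2 φ1 φ2 g + mul2 φ1 φ2 h := by
  funext x
  simp only [mul2, evenPart, oddPart, Pi.add_apply]
  ring

lemma mul2_smul (c : ℂ) (g : UnitCircle → ℂ) : mul2 φ1 φ2 (c • g) = c • mul2 φ1 φ2 g := by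
  funext x
  simp only [mul2, evenPart, oddPart, Pi.smul_apply, smul_eq_mul]
  ring

lemma mul2_of_add_halfTurn_eq {g : UnitCircle → ℂ} (hg : ∀ x, g (x + halfTurn) = g x) :
    mul2 φ1 φ2 g = φ1 * g := by
  funext x
  simp only [mul2, evenPart, oddPart, hg, Pi.mul_apply]
  ring

lemma mul2_of_add_halfTurn_eq_neg {g : UnitCircle → ℂ} (hg : ∀ x, g (x + halfTurn) = -g x) :
    mul2 φ1 φ2 g = φ2 * g := by
  funext x
  simp only [mul2, evenPart, oddPart, hg, Pi.mul_apply]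
  ring

lemma mul2_zz_sq_mul (g : UnitCircle → ℂ) :
    mul2 φ1 φ2 (fun x => zz x ^ 2 * g x) = fun x => zz x ^ 2 * mul2 φ1 φ2 g x := by
  funext x
  simp only [mul2, evenPart, oddPart, zz, fourier_add_halfTurn]
  ring

end Mul2

def mul2EqLocus (S : L2T →L[ℂ] L2T) (φ1 φ2 : UnitCircle → ℂ) : Submodule ℂ L2T where
  carrier := {f | ⇑(S f) =ᵐ[hm] mul2 φ1 φ2 ⇑f}
  zero_mem' := by
    change ⇑(S 0) =ᵐ[hm] mul2 φ1 φ2 ⇑(0 : L2T)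
    filter_upwards [Lp.coeFn_zero ℂ 2 hm, mul2_congr φ1 φ2 (Lp.coeFn_zero ℂ 2 hm)] with x h0 hx
    rw [map_zero, h0, hx]
    simp [mul2, evenPart, oddPart]
  add_mem' {f g} hf hg := by
    change ⇑(S (f + g)) =ᵐ[hm] mul2 φ1 φ2 ⇑(f + g)
    filter_upwards [Lp.coeFn_add (S f) (S g), hf, hg, mul2_congr φ1 φ2 (Lp.coeFn_add f g)]
      with x hS hf hg hfg
    rw [map_add, hS, hfg, mul2_add, Pi.add_apply, Pi.add_apply, hf, hg]
  smul_mem' c f hf := by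
    change ⇑(S (c • f)) =ᵐ[hm] mul2 φ1 φ2 ⇑(c • f)
    filter_upwards [Lp.coeFn_smul c (S f), hf, mul2_congr φ1 φ2 (Lp.coeFn_smul c f)]
      with x hS hf hcf
    rw [map_smul, hS, hcf, mul2_smul, Pi.smul_apply, Pi.smul_apply, hf]

lemma isClosed_mul2EqLocus (S : L2T →L[ℂ] L2T) (φ1 φ2 : UnitCircle → ℂ) :
    IsClosed (mul2EqLocus S φ1 φ2 : Set L2T) := by
  refine IsSeqClosed.isClosed fun u f hu hlim => ?_
  obtain ⟨κ, hκ, hSu⟩ := (tendstoInMeasure_of_tendsto_Lp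
    ((S.continuous.tendsto f).comp hlim)).exists_seq_tendsto_ae
  obtain ⟨ν, hν, hu'⟩ :=
    (tendstoInMeasure_of_tendsto_Lp (hlim.comp hκ.tendsto_atTop)).exists_seq_tendsto_ae
  have hrep : ∀ᵐ x ∂hm, ∀ n, ⇑(S (u n)) x = mul2 φ1 φ2 ⇑(u n) x := ae_all_iff.2 hu
  change ⇑(S f) =ᵐ[hm] mul2 φ1 φ2 ⇑f
  filter_upwards [hSu, hu', ae_add_halfTurn hu', hrep] with x hSx hx hx' hrepx
  refine tendsto_nhds_unique (hSx.comp hν.tendsto_atTop) ?_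
  simp only [Function.comp_def, hrepx, mul2, evenPart, oddPart]
  exact (((hx.add hx').div_const 2).const_mul _).add (((hx.sub hx').div_const 2).const_mul _)

lemma mul2EqLocus_eq_top {S : L2T →L[ℂ] L2T} {φ1 φ2 : UnitCircle → ℂ}
    (h : ∀ n, fourierLp 2 n ∈ mul2EqLocus S φ1 φ2) : mul2EqLocus S φ1 φ2 = ⊤ := by
  rw [eq_top_iff, ← span_fourierLp_closure_eq_top (p := 2) ENNReal.ofNat_ne_top]
  exact Submodule.topologicalClosure_minimal _ (Submodule.span_le.2 (Set.range_subset_iff.2 h))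
    (isClosed_mul2EqLocus S φ1 φ2)

lemma memLp_top_of_mul2_eq_mul {S : L2T →L[ℂ] L2T} {φ1 φ2 φ : UnitCircle → ℂ}
    (hrep : ∀ f : L2T, ⇑(S f) =ᵐ[hm] mul2 φ1 φ2 ⇑f) (hφ : AEStronglyMeasurable φ hm) (n : ℤ)
    (hmul : ∀ g, (∀ x, g (x + halfTurn) = (-1) ^ n * g x) → mul2 φ1 φ2 g = φ * g) :
    MemLp φ ∞ hm := by
  refine memLp_top_of_setLIntegral_enorm_sq_le hφ (2 * ‖S‖₊ ^ 2) fun A hA => ?_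
  obtain ⟨B, hAB, hB, hBshift, hBA⟩ := exists_halfTurn_invariant_superset hA
  set g := B.indicator (fourier n)
  have hg_shift : ∀ x, g (x + halfTurn) = (-1) ^ n * g x := by
    intro x
    simp only [g]
    by_cases hx : x ∈ B
    · rw [Set.indicator_of_mem ((hBshift x).2 hx), Set.indicator_of_mem hx, fourier_add_halfTurn]
    · rw [Set.indicator_of_notMem (mt (hBshift x).1 hx), Set.indicator_of_notMem hx, mul_zero]
  have hg_norm : ∀ x, ‖g x‖ₑ ^ 2 = B.indicator 1 x := by
    intro x
    simp only [g]
    by_cases hx : x ∈ B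
    · rw [Set.indicator_of_mem hx, Set.indicator_of_mem hx, ← ofReal_norm, norm_fourier_apply,
        ENNReal.ofReal_one, one_pow, Pi.one_apply]
    · rw [Set.indicator_of_notMem hx, Set.indicator_of_notMem hx, enorm_zero,
        zero_pow two_ne_zero]
  have hg : MemLp g 2 hm := ((fourier n).memLp hm ℂ).indicator hB
  calc ∫⁻ x in A, ‖φ x‖ₑ ^ 2 ∂hm ≤ ‖S‖ₑ ^ 2 * ∫⁻ x, ‖g x‖ₑ ^ 2 ∂hm :=
        setLIntegral_enorm_sq_le_of_ae_eq_mul S hg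
          (((hrep _).trans (mul2_congr _ _ hg.coeFn_toLp)).trans (hmul g hg_shift).eventuallyEq)
          hA fun x hx => by simp only [g]; rw [Set.indicator_of_mem (hAB hx), norm_fourier_apply]
    _ = ‖S‖ₑ ^ 2 * hm B := by simp_rw [hg_norm]; rw [lintegral_indicator_one hB]
    _ ≤ ‖S‖ₑ ^ 2 * (2 * hm A) := by gcongr
    _ = ((2 * ‖S‖₊ ^ 2 : ℝ≥0) : ℝ≥0∞) * hm A := by push_cast; rw [enorm_eq_nnnorm]; ring

def symbol (S : L2T →L[ℂ] L2T) (n : ℤ) : UnitCircle → ℂ :=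
  fun x => fourier (-n) x * (S (fourierLp 2 n) : UnitCircle → ℂ) x

lemma fourier_mul_symbol (S : L2T →L[ℂ] L2T) (n : ℤ) (x : UnitCircle) :
    fourier n x * symbol S n x = (S (fourierLp 2 n) : UnitCircle → ℂ) x := by
  rw [symbol, ← mul_assoc, ← fourier_add, add_neg_cancel, fourier_zero, one_mul]

section Commuting

variable {Mz2 : L2T →L[ℂ] L2T}
  (hMz2 : ∀ f : L2T, (Mz2 f : UnitCircle → ℂ) =ᵐ[hm] fun x => zz x ^ 2 * (f : UnitCircle → ℂ) x)
  {S : L2T →L[ℂ] L2T}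
include hMz2

lemma map_fourierLp (n : ℤ) : Mz2 (fourierLp 2 n) = fourierLp 2 (n + 2) := by
  refine Lp.ext ?_
  filter_upwards [hMz2 (fourierLp 2 n), coeFn_fourierLp 2 n, coeFn_fourierLp 2 (n + 2)]
    with x hx hn hn2
  rw [hx, hn, hn2, zz_sq, fourier_add, mul_comm]

lemma map_comp_eq_of_ae_eq_mul2 {φ1 φ2 : UnitCircle → ℂ}
    (hrep : ∀ f : L2T, ⇑(S f) =ᵐ[hm] mul2 φ1 φ2 ⇑f) (f : L2T) : S (Mz2 f) = Mz2 (S f) := by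
  refine Lp.ext ?_
  filter_upwards [hrep (Mz2 f), mul2_congr φ1 φ2 (hMz2 f), hrep f, hMz2 (S f)]
    with x hSM hM hS hMS
  rw [hSM, hM, mul2_zz_sq_mul, hMS, hS]

variable (hcomm : ∀ f, S (Mz2 f) = Mz2 (S f))
include hcomm

lemma symbol_add_two (n : ℤ) : symbol S (n + 2) =ᵐ[hm] symbol S n := by
  filter_upwards [hMz2 (S (fourierLp 2 n))] with x hx
  rw [symbol, ← map_fourierLp hMz2, hcomm, hx, zz_sq, symbol, ← mul_assoc, ← fourier_add]
  ring_nf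

lemma fourierLp_mem_mul2EqLocus (n : ℤ) :
    fourierLp 2 n ∈ mul2EqLocus S (symbol S 0) (symbol S 1) := by
  have hsymbol := ae_eq_emod_two (symbol_add_two hMz2 hcomm) n
  refine EventuallyEq.trans ?_ (mul2_congr _ _ (coeFn_fourierLp 2 n).symm)
  rcases Int.emod_two_eq_zero_or_one n with h | h
  · rw [mul2_of_add_halfTurn_eq _ _ fun x => by
      rw [fourier_add_halfTurn, (Int.even_iff.2 h).neg_one_zpow, one_mul]]
    filter_upwards [hsymbol] with x hx
    rw [← fourier_mul_symbol, hx, h, Pi.mul_apply, mul_comm]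
  · rw [mul2_of_add_halfTurn_eq_neg _ _ fun x => by
      rw [fourier_add_halfTurn, (Int.odd_iff.2 h).neg_one_zpow, neg_one_mul]]
    filter_upwards [hsymbol] with x hx
    rw [← fourier_mul_symbol, hx, h, Pi.mul_apply, mul_comm]

lemma ae_eq_mul2_symbol (f : L2T) : ⇑(S f) =ᵐ[hm] mul2 (symbol S 0) (symbol S 1) ⇑f := by
  have htop := mul2EqLocus_eq_top (fourierLp_mem_mul2EqLocus hMz2 hcomm)
  exact (htop ▸ Submodule.mem_top : f ∈ mul2EqLocus S (symbol S 0) (symbol S 1))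

end Commuting

end Mz2Commutant

open Mz2Commutant in
/-- A bounded operator `S` on `L²(𝕋)` commutes with `M_{z²}` iff there are
`φ₁, φ₂ ∈ L^∞` with `Sf = φ₁ f^e + φ₂ f^o` for all `f`. -/
theorem stmt_8 (Mz2 : L2T →L[ℂ] L2T)
    (hMz2 : ∀ f : L2T, (Mz2 f : UnitCircle → ℂ) =ᵐ[hm]
      fun x => zz x ^ 2 * (f : UnitCircle → ℂ) x)
    (S : L2T →L[ℂ] L2T) :
    (∀ f, S (Mz2 f) = Mz2 (S f)) ↔
      ∃ φ1 φ2 : UnitCircle → ℂ, MemLp φ1 ⊤ hm ∧ MemLp φ2 ⊤ hm ∧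
        ∀ f : L2T, (S f : UnitCircle → ℂ) =ᵐ[hm]
          fun x => φ1 x * evenPart (f : UnitCircle → ℂ) x
            + φ2 x * oddPart (f : UnitCircle → ℂ) x := by
  constructor
  · intro hcomm
    have hrep := ae_eq_mul2_symbol hMz2 hcomm
    have hsymbol (n : ℤ) : AEStronglyMeasurable (symbol S n) hm :=
      (fourier (-n)).continuous.aestronglyMeasurable.mul (Lp.aestronglyMeasurable _)
    refine ⟨symbol S 0, symbol S 1, ?_, ?_, hrep⟩
    · refine memLp_top_of_mul2_eq_mul hrep (hsymbol 0) 0 fun g hg => ?_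
      exact mul2_of_add_halfTurn_eq _ _ fun x => by rw [hg, zpow_zero, one_mul]
    · refine memLp_top_of_mul2_eq_mul hrep (hsymbol 1) 1 fun g hg => ?_
      exact mul2_of_add_halfTurn_eq_neg _ _ fun x => by rw [hg, zpow_one, neg_one_mul]
  · rintro ⟨φ1, φ2, -, -, hrep⟩
    exact map_comp_eq_of_ae_eq_mul2 hMz2 hrep
end
end

section
/- If C is a conjugation on L²(𝕋) satisfying C M_{z²} = M_{\bar{z}²} C, then there exist φ_1, φ_2 ∈ L^∞(𝕋) with |φ_1|² + |φ_2|² = 2 a.e. and φ_1^e = φ_2^e such that C = M_{[φ_1,φ_2]} ∘ C_{z²}, where C_{z²}(f) = z\bar{f} and M_{[φ_1,φ_2]}f = φ_1 f^e + φ_2 f^o. Conversely, any such C satisfies C M_{z²} = M_{\bar{z}²} C. -/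
open MeasureTheory Complex
open scoped Real

noncomputable section

/-!
Twisting `C` by the conjugation `C_{z²} f = z f̄` gives the unitary `T = C ∘ C_{z²}`. The
intertwining relation gives `C z^{2k+r} = z^{-2k} C z^r`, so `T` multiplies `z^{2k}` by `φ₁ = C z`
and `z^{2k+1}` by `φ₂ = z̄ · C 1`; by density `T = M_{[φ₁,φ₂]}`, i.e. `C = M_{[φ₁,φ₂]} ∘ C_{z²}`.
The symmetry `⟪C f, g⟫ = ⟪C g, f⟫` of a conjugation makes the even Fourier coefficients of `φ₁`
and `φ₂` agree, so `φ₁^e = φ₂^e`. Evaluating `C² = 1` at `1` and at `z` gives two pointwise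
identities which, together with `φ₁^e = φ₂^e`, force `|φ₁|² + |φ₂|² = 2`.
Conversely, `z̄²` is even, so multiplication by it commutes with `M_{[φ₁,φ₂]}`.
-/

open ComplexConjugate

lemma fourier_add_pi (n : ℤ) (x : UnitCircle) :
    fourier n (x + (π : UnitCircle)) = (-1 : ℂ) ^ n * fourier n x := by
  have hπ : fourier n (π : UnitCircle) = (-1 : ℂ) ^ n := by
    rw [fourier_coe_apply, ← Complex.exp_pi_mul_I, ← Complex.exp_int_mul]
    congr 1
    push_cast
    field_simp
  rw [fourier_apply, smul_add, AddCircle.toCircle_add, Circle.coe_mul, ← fourier_apply,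
    ← fourier_apply, hπ, mul_comm]

lemma zz_add_pi (x : UnitCircle) : zz (x + (π : UnitCircle)) = -zz x := by
  simp only [zz, fourier_add_pi, zpow_one]; ring

lemma norm_zz (x : UnitCircle) : ‖zz x‖ = 1 := Circle.norm_coe _

lemma zz_mul_conj (x : UnitCircle) : zz x * conj (zz x) = 1 := by
  rw [Complex.mul_conj, Complex.normSq_eq_norm_sq, norm_zz]; norm_num

lemma conj_zz (x : UnitCircle) : conj (zz x) = fourier (-1) x := fourier_neg.symm

lemma conj_zz_sq (x : UnitCircle) : conj (zz x) ^ 2 = fourier (-2) x := by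
  rw [conj_zz, sq, ← fourier_add]; norm_num

lemma zz_sq (x : UnitCircle) : zz x ^ 2 = fourier 2 x := by
  rw [zz, sq, ← fourier_add]; norm_num

lemma ae_comp_add_pi {p : UnitCircle → Prop} (h : ∀ᵐ x ∂hm, p x) :
    ∀ᵐ x ∂hm, p (x + (π : UnitCircle)) :=
  (measurePreserving_add_right hm _).quasiMeasurePreserving.ae h

lemma mul2_congr (ψe ψo : UnitCircle → ℂ) {u v : UnitCircle → ℂ} (h : u =ᵐ[hm] v) :
    mul2 ψe ψo u =ᵐ[hm] mul2 ψe ψo v := by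
  filter_upwards [h, ae_comp_add_pi h] with x hx hxπ
  simp only [mul2, evenPart, oddPart, hx, hxπ]

lemma mul2_fourier (ψe ψo : UnitCircle → ℂ) (n : ℤ) :
    mul2 ψe ψo (fourier n) = fun x => (if Even n then ψe x else ψo x) * fourier n x := by
  ext x
  simp only [mul2, evenPart, oddPart, fourier_add_pi]
  rcases Int.even_or_odd n with hn | hn
  · rw [if_pos hn, hn.neg_one_zpow]; ring
  · rw [if_neg (Int.not_even_iff_odd.mpr hn), hn.neg_one_zpow]; ring

lemma mul2_add (ψe ψo u v : UnitCircle → ℂ) :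
    mul2 ψe ψo (u + v) = mul2 ψe ψo u + mul2 ψe ψo v := by
  ext x; simp only [mul2, evenPart, oddPart, Pi.add_apply]; ring

lemma mul2_smul (ψe ψo u : UnitCircle → ℂ) (c : ℂ) :
    mul2 ψe ψo (c • u) = c • mul2 ψe ψo u := by
  ext x; simp only [mul2, evenPart, oddPart, Pi.smul_apply, smul_eq_mul]; ring

lemma mul2_zero (ψe ψo : UnitCircle → ℂ) : mul2 ψe ψo 0 = 0 := by
  ext x; simp [mul2, evenPart, oddPart]

lemma fourierCoeff_eq_inner (f : L2T) (n : ℤ) :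
    fourierCoeff f n = (inner ℂ (fourierLp 2 n : L2T) f : ℂ) := by
  rw [← fourierBasis_repr, fourierBasis.repr_apply_apply, coe_fourierBasis]

lemma fourierCoeff_fourier_mul (m n : ℤ) (ψ : UnitCircle → ℂ) :
    fourierCoeff (fun x => fourier m x * ψ x) n = fourierCoeff ψ (n - m) := by
  unfold fourierCoeff
  congr 1
  ext x
  rw [smul_eq_mul, smul_eq_mul, ← mul_assoc, ← fourier_add, show -n + m = -(n - m) by ring]

lemma fourierCoeff_comp_add_pi (ψ : UnitCircle → ℂ) (n : ℤ) :
    fourierCoeff (fun x => ψ (x + (π : UnitCircle))) n = (-1 : ℂ) ^ n * fourierCoeff ψ n := by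
  have hshift : ∀ x : UnitCircle,
      fourier (-n) x = (-1 : ℂ) ^ n * fourier (-n) (x + (π : UnitCircle)) := by
    intro x
    rw [fourier_add_pi, ← mul_assoc, ← zpow_add₀ (by norm_num), add_neg_cancel, zpow_zero,
      one_mul]
  unfold fourierCoeff
  simp_rw [smul_eq_mul]
  rw [integral_congr_ae (Filter.Eventually.of_forall fun x => by
    rw [hshift x, mul_assoc]), integral_const_mul]
  congr 1
  exact integral_add_right_eq_self (fun x => fourier (-n) x * ψ x) _

lemma fourierCoeff_evenPart {ψ : UnitCircle → ℂ} (hψ : Integrable ψ hm) (n : ℤ) :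
    fourierCoeff (evenPart ψ) n = if Even n then fourierCoeff ψ n else 0 := by
  have hψπ : Integrable (fun x => ψ (x + (π : UnitCircle))) hm :=
    hψ.comp_add_right _
  have h : evenPart ψ = 
      fun x => (2⁻¹ : ℂ) * (ψ + fun x => ψ (x + (π : UnitCircle))) x := by
    ext x; simp only [evenPart, Pi.add_apply]; ring
  rw [h, fourierCoeff.const_mul, fourierCoeff.add hψ hψπ, Pi.add_apply, fourierCoeff_comp_add_pi]
  rcases Int.even_or_odd n with hn | hn
  · rw [if_pos hn, hn.neg_one_zpow]; ring
  · rw [if_neg (Int.not_even_iff_odd.mpr hn), hn.neg_one_zpow]; ring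

lemma memLp_evenPart {ψ : UnitCircle → ℂ} (hψ : MemLp ψ 2 hm) :
    MemLp (evenPart ψ) 2 hm := by
  have hψπ := hψ.comp_measurePreserving (measurePreserving_add_right hm (π : UnitCircle))
  convert (hψ.add hψπ).mul_const 2⁻¹ using 1
  ext x
  simp only [evenPart, Pi.add_apply, Function.comp_apply, div_eq_mul_inv]

lemma ae_eq_of_fourierCoeff_eq {f g : UnitCircle → ℂ} (hf : MemLp f 2 hm) (hg : MemLp g 2 hm)
    (h : ∀ n, fourierCoeff f n = fourierCoeff g n) : f =ᵐ[hm] g := by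
  refine (hf.toLp_eq_toLp_iff hg).mp (fourierBasis.repr.injective ?_)
  ext n
  rw [fourierBasis_repr, fourierBasis_repr, fourierCoeff_congr_ae hf.coeFn_toLp,
    fourierCoeff_congr_ae hg.coeFn_toLp, h]

lemma evenPart_ae_eq_of_fourierCoeff_even {f g : UnitCircle → ℂ} (hf : MemLp f 2 hm)
    (hg : MemLp g 2 hm) (h : ∀ k, fourierCoeff f (2 * k) = fourierCoeff g (2 * k)) :
    evenPart f =ᵐ[hm] evenPart g := by
  refine ae_eq_of_fourierCoeff_eq (memLp_evenPart hf) (memLp_evenPart hg) fun n => ?_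
  rw [fourierCoeff_evenPart (hf.integrable one_le_two),
    fourierCoeff_evenPart (hg.integrable one_le_two)]
  split_ifs with hn
  · obtain ⟨k, rfl⟩ := hn
    simpa only [two_mul] using h k
  · rfl

namespace IsConjugation

variable {C : L2T → L2T} (hC : IsConjugation C)
include hC

lemma norm_map (f : L2T) : ‖C f‖ = ‖f‖ := by
  have h := hC.inner_eq f f
  rw [inner_self_eq_norm_sq_to_K, inner_self_eq_norm_sq_to_K] at h
  exact (pow_left_inj₀ (norm_nonneg _) (norm_nonneg _) two_ne_zero).mp (by exact_mod_cast h)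

lemma inner_map_comm (f g : L2T) : (inner ℂ (C f) g : ℂ) = inner ℂ (C g) f := by
  simpa only [hC.involutive] using hC.inner_eq f (C g)

lemma fourierCoeff_map_fourierLp_comm (m n : ℤ) :
    fourierCoeff (C (fourierLp 2 m)) n = fourierCoeff (C (fourierLp 2 n)) m := by
  rw [fourierCoeff_eq_inner, fourierCoeff_eq_inner, ← inner_conj_symm, hC.inner_map_comm,
    inner_conj_symm]

def compLinearIsometry {D : L2T → L2T} (hD : IsConjugation D) : L2T →ₗᵢ[ℂ] L2T where
  toFun f := C (D f)
  map_add' f g := by rw [hD.map_add, hC.map_add]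
  map_smul' c f := by rw [hD.map_smul, hC.map_smul, Complex.conj_conj]; rfl
  norm_map' f := by
    show ‖C (D f)‖ = ‖f‖
    rw [hC.norm_map, hD.norm_map]

end IsConjugation

lemma memLp_zz_mul_conj (f : L2T) :
    MemLp (fun y => zz y * conj ((f : UnitCircle → ℂ) y)) 2 hm :=
  MemLp.congr_norm (g := fun y => zz y * conj ((f : UnitCircle → ℂ) y)) (Lp.memLp f)
    ((map_continuous (fourier 1)).aestronglyMeasurable.mul
      (Complex.continuous_conj.comp_aestronglyMeasurable (Lp.aestronglyMeasurable f)))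
    (by simp [norm_zz])

def zMulConj (f : L2T) : L2T := (memLp_zz_mul_conj f).toLp _

lemma coeFn_zMulConj (f : L2T) :
    zMulConj f =ᵐ[hm] fun y => zz y * conj ((f : UnitCircle → ℂ) y) :=
  (memLp_zz_mul_conj f).coeFn_toLp

lemma isConjugation_zMulConj : IsConjugation zMulConj where
  map_add f g := by
    apply Lp.ext
    filter_upwards [coeFn_zMulConj (f + g), coeFn_zMulConj f, coeFn_zMulConj g,
      Lp.coeFn_add f g, Lp.coeFn_add (zMulConj f) (zMulConj g)] with x h h₁ h₂ h₃ h₄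
    rw [h, h₄, Pi.add_apply, h₁, h₂, h₃, Pi.add_apply, map_add, mul_add]
  map_smul c f := by
    apply Lp.ext
    filter_upwards [coeFn_zMulConj (c • f), coeFn_zMulConj f, Lp.coeFn_smul c f,
      Lp.coeFn_smul (conj c) (zMulConj f)] with x h h₁ h₂ h₃
    rw [h, h₃, Pi.smul_apply, h₁, h₂, Pi.smul_apply, smul_eq_mul, smul_eq_mul, map_mul]
    ring
  involutive f := by
    apply Lp.ext
    filter_upwards [coeFn_zMulConj (zMulConj f), coeFn_zMulConj f] with x h h₁
    rw [h, h₁, map_mul, Complex.conj_conj, ← mul_assoc, zz_mul_conj, one_mul]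
  inner_eq f g := by
    rw [L2.inner_def, L2.inner_def]
    refine integral_congr_ae ?_
    filter_upwards [coeFn_zMulConj f, coeFn_zMulConj g] with x h₁ h₂
    simp only [h₁, h₂, RCLike.inner_apply, map_mul, Complex.conj_conj]
    linear_combination
      ((f : UnitCircle → ℂ) x * conj ((g : UnitCircle → ℂ) x)) * zz_mul_conj x

lemma zMulConj_fourierLp (n : ℤ) : zMulConj (fourierLp 2 n) = fourierLp 2 (1 - n) := by
  apply Lp.ext
  filter_upwards [coeFn_zMulConj (fourierLp 2 n), coeFn_fourierLp 2 n,
    coeFn_fourierLp 2 (1 - n)] with x h h₁ h₂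
  rw [h, h₁, h₂, sub_eq_add_neg, fourier_add, fourier_neg]
  rfl

def eqLocusMul2 (R : L2T →L[ℂ] L2T) (ψe ψo : UnitCircle → ℂ) : Submodule ℂ L2T where
  carrier := {f | R f =ᵐ[hm] mul2 ψe ψo f}
  zero_mem' := by
    simp only [Set.mem_ofPred_eq, map_zero]
    filter_upwards [Lp.coeFn_zero ℂ 2 hm, mul2_congr ψe ψo (Lp.coeFn_zero ℂ 2 hm)]
      with x h₁ h₂
    rw [h₁, h₂, mul2_zero]
  add_mem' {f g} hf hg := by
    simp only [Set.mem_ofPred_eq, map_add] at hf hg ⊢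
    filter_upwards [Lp.coeFn_add (R f) (R g), mul2_congr ψe ψo (Lp.coeFn_add f g), hf, hg]
      with x h₁ h₂ h₃ h₄
    rw [h₁, h₂, mul2_add, Pi.add_apply, Pi.add_apply, h₃, h₄]
  smul_mem' c f hf := by
    simp only [Set.mem_ofPred_eq, map_smul] at hf ⊢
    filter_upwards [Lp.coeFn_smul c (R f), mul2_congr ψe ψo (Lp.coeFn_smul c f), hf]
      with x h₁ h₂ h₃
    rw [h₁, h₂, mul2_smul, Pi.smul_apply, Pi.smul_apply, h₃]

/-- `M_{[ψe,ψo]}` need not be bounded on `L²`; closedness comes from a.e. convergence of a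
subsequence, taken for `f` and `R f` at once. -/
lemma isClosed_eqLocusMul2 (R : L2T →L[ℂ] L2T) (ψe ψo : UnitCircle → ℂ) :
    IsClosed (eqLocusMul2 R ψe ψo : Set L2T) := by
  refine IsSeqClosed.isClosed fun u f hu hlim => ?_
  obtain ⟨ns, hns, hu_ae⟩ := (tendstoInMeasure_of_tendsto_Lp hlim).exists_seq_tendsto_ae
  obtain ⟨ms, hms, hRu_ae⟩ := (tendstoInMeasure_of_tendsto_Lp
    ((R.continuous.tendsto f).comp (hlim.comp hns.tendsto_atTop))).exists_seq_tendsto_ae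
  have hu_eq : ∀ᵐ x ∂hm, ∀ i, R (u (ns (ms i))) x = mul2 ψe ψo (u (ns (ms i))) x :=
    ae_all_iff.2 fun i => hu _
  show R f =ᵐ[hm] mul2 ψe ψo f
  filter_upwards [hu_ae, ae_comp_add_pi hu_ae, hRu_ae, hu_eq] with x h₁ h₂ h₃ h₄
  have h₁' := h₁.comp hms.tendsto_atTop
  have h₂' := h₂.comp hms.tendsto_atTop
  simp only [Function.comp_def, h₄] at h₁' h₂' h₃
  refine tendsto_nhds_unique h₃ ?_
  exact (((h₁'.add h₂').div_const 2).const_mul _).add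
    (((h₁'.sub h₂').div_const 2).const_mul _)

theorem ae_eq_mul2_of_fourierLp (R : L2T →L[ℂ] L2T) (ψe ψo : UnitCircle → ℂ)
    (h : ∀ n, R (fourierLp 2 n) =ᵐ[hm] mul2 ψe ψo (fourier n)) (f : L2T) :
    R f =ᵐ[hm] mul2 ψe ψo f := by
  have hspan : Submodule.span ℂ (Set.range (fourierLp 2)) ≤ eqLocusMul2 R ψe ψo := by
    rw [Submodule.span_le]
    rintro _ ⟨n, rfl⟩
    exact (h n).trans (mul2_congr ψe ψo (coeFn_fourierLp 2 n).symm)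
  have hclosure := Submodule.topologicalClosure_minimal _ hspan (isClosed_eqLocusMul2 R ψe ψo)
  rw [span_fourierLp_closure_eq_top (by norm_num)] at hclosure
  exact hclosure Submodule.mem_top

lemma memLp_top_of_norm_sq_add_norm_sq_eq {α E F : Type*} [MeasurableSpace α] {μ : Measure α}
    [NormedAddCommGroup E] [NormedAddCommGroup F] {f : α → E} {g : α → F} {c : ℝ}
    (hf : AEStronglyMeasurable f μ) (h : ∀ᵐ x ∂μ, ‖f x‖ ^ 2 + ‖g x‖ ^ 2 = c) :
    MemLp f ⊤ μ :=
  memLp_top_of_bound hf √c <| h.mono fun x hx =>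
    Real.le_sqrt_of_sq_le (by nlinarith [sq_nonneg ‖g x‖])

lemma norm_sq_add_norm_sq_eq_two {φ₁ φ₂ : UnitCircle → ℂ} {x : UnitCircle}
    (hA : mul2 φ₁ φ₂ (fun y => conj (φ₂ y)) x = 1)
    (hB : mul2 φ₁ φ₂ (fun y => zz y * conj (φ₁ y)) x = zz x)
    (hE : evenPart φ₁ x = evenPart φ₂ x) :
    ‖φ₁ x‖ ^ 2 + ‖φ₂ x‖ ^ 2 = 2 := by
  simp only [mul2, evenPart, oddPart, zz_add_pi] at hA hB hE
  set p := φ₁ x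
  set q := φ₂ x
  set p' := φ₁ (x + (π : UnitCircle))
  set q' := φ₂ (x + (π : UnitCircle))
  set z := zz x
  have hz : z * conj z = 1 := zz_mul_conj x
  have hE' := congrArg conj hE
  simp only [map_div₀, map_add, map_ofNat] at hE'
  have hB' : p * ((conj p - conj p') / 2) + q * ((conj p + conj p') / 2) = 1 := by
    linear_combination
      conj z * hB - (p * ((conj p - conj p') / 2) + q * ((conj p + conj p') / 2) - 1) * hz
  have h : p * conj p + q * conj q = 2 := by
    linear_combination hA + hB' + (p - q) * hE'
  rw [Complex.mul_conj, Complex.mul_conj, Complex.normSq_eq_norm_sq,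
    Complex.normSq_eq_norm_sq] at h
  exact_mod_cast h

def symbolEven (C : L2T → L2T) : UnitCircle → ℂ := C (fourierLp 2 1)

def symbolOdd (C : L2T → L2T) : UnitCircle → ℂ := fun x => conj (zz x) * C (fourierLp 2 0) x

lemma symbolOdd_eq_fourier_mul (C : L2T → L2T) :
    symbolOdd C = fun x => fourier (-1) x * C (fourierLp 2 0) x := by
  ext x; rw [symbolOdd, conj_zz]

lemma memLp_symbolOdd (C : L2T → L2T) : MemLp (symbolOdd C) 2 hm := by
  refine (Lp.memLp (C (fourierLp 2 0))).congr_norm ?_ (by simp [symbolOdd, norm_zz])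
  rw [symbolOdd_eq_fourier_mul]
  exact (map_continuous _).aestronglyMeasurable.mul (Lp.aestronglyMeasurable _)

section Intertwining

variable {C : L2T → L2T}
  (hshift : ∀ n, C (fourierLp 2 (n + 2)) =ᵐ[hm] fun x => fourier (-2) x * C (fourierLp 2 n) x)
include hshift

lemma map_fourierLp_add_two_mul (n k : ℤ) :
    C (fourierLp 2 (n + 2 * k)) =ᵐ[hm] fun x => fourier (-(2 * k)) x * C (fourierLp 2 n) x := by
  induction k using Int.induction_on with
  | zero => simp
  | succ k ih =>
    filter_upwards [hshift (n + 2 * k), ih] with x h₁ h₂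
    rw [show n + 2 * (k + 1) = n + 2 * k + 2 by ring, h₁, h₂, ← mul_assoc, ← fourier_add]
    ring_nf
  | pred k ih =>
    filter_upwards [hshift (n + 2 * (-k - 1)), ih] with x h₁ h₂
    rw [show n + 2 * (-k - 1) + 2 = n + 2 * -k by ring, h₂] at h₁
    have h₃ : fourier 2 x * fourier (-2) x = 1 := by rw [← fourier_add]; simp
    rw [show -(2 * (-(k : ℤ) - 1)) = 2 + -(2 * -k) by ring, fourier_add]
    linear_combination (-fourier 2 x) * h₁ - C (fourierLp 2 (n + 2 * (-k - 1))) x * h₃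

lemma map_zMulConj_fourierLp (n : ℤ) :
    C (zMulConj (fourierLp 2 n)) =ᵐ[hm] mul2 (symbolEven C) (symbolOdd C) (fourier n) := by
  rw [zMulConj_fourierLp, mul2_fourier]
  rcases Int.even_or_odd' n with ⟨k, rfl | rfl⟩
  · filter_upwards [map_fourierLp_add_two_mul hshift 1 (-k)] with x h
    rw [show 1 - 2 * k = 1 + 2 * -k by ring, h, if_pos (even_two_mul k), symbolEven,
      show -(2 * -k) = 2 * k by ring, mul_comm]
  · filter_upwards [map_fourierLp_add_two_mul hshift 0 (-k)] with x h
    rw [show 1 - (2 * k + 1) = 0 + 2 * -k by ring, h, if_neg (Int.not_even_two_mul_add_one k),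
      symbolOdd, show -(2 * -k) = 2 * k by ring, fourier_add, ← zz]
    linear_combination (-(fourier (2 * k) x * C (fourierLp 2 0) x)) * zz_mul_conj x

theorem ae_eq_mul2_symbol (hC : IsConjugation C) (f : L2T) :
    C f =ᵐ[hm]
      mul2 (symbolEven C) (symbolOdd C) fun y => zz y * conj ((f : UnitCircle → ℂ) y) := by
  let T := (hC.compLinearIsometry isConjugation_zMulConj).toContinuousLinearMap
  have hT : T (zMulConj f) = C f := congrArg C (isConjugation_zMulConj.involutive f)
  rw [← hT]
  exact (ae_eq_mul2_of_fourierLp T _ _ (map_zMulConj_fourierLp hshift) (zMulConj f)).trans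
    (mul2_congr _ _ (coeFn_zMulConj f))

/-- In degree `2k` both symbols have the `(2k + 1)`-th Fourier coefficient of `C 1`; for `φ₁`
by the symmetry `⟪C z, z^{2k}⟫ = ⟪C z^{2k}, z⟫` of a conjugation. -/
theorem evenPart_symbolEven_ae_eq (hC : IsConjugation C) :
    evenPart (symbolEven C) =ᵐ[hm] evenPart (symbolOdd C) := by
  refine evenPart_ae_eq_of_fourierCoeff_even (Lp.memLp _) (memLp_symbolOdd C) fun k => ?_
  have hC2k : C (fourierLp 2 (2 * k)) =ᵐ[hm]
      fun x => fourier (-(2 * k)) x * C (fourierLp 2 0) x := by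
    simpa only [zero_add] using map_fourierLp_add_two_mul hshift 0 k
  rw [symbolEven, hC.fourierCoeff_map_fourierLp_comm, fourierCoeff_congr_ae hC2k,
    symbolOdd_eq_fourier_mul, fourierCoeff_fourier_mul, fourierCoeff_fourier_mul]
  ring_nf

theorem norm_symbolEven_sq_add_norm_symbolOdd_sq (hC : IsConjugation C) :
    ∀ᵐ x ∂hm, ‖symbolEven C x‖ ^ 2 + ‖symbolOdd C x‖ ^ 2 = 2 := by
  have hA := ae_eq_mul2_symbol hshift hC (C (fourierLp 2 0))
  have hB := ae_eq_mul2_symbol hshift hC (C (fourierLp 2 1))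
  have hconj : (fun y => zz y * conj (C (fourierLp 2 0) y)) = fun y => conj (symbolOdd C y) := by
    ext y; simp [symbolOdd]
  rw [hC.involutive, hconj] at hA
  rw [hC.involutive] at hB
  filter_upwards [hA, hB, coeFn_fourierLp 2 0, coeFn_fourierLp 2 1,
    evenPart_symbolEven_ae_eq hshift hC] with x hA hB h₀ h₁ hE
  rw [h₀, fourier_zero] at hA
  rw [h₁] at hB
  exact norm_sq_add_norm_sq_eq_two hA.symm hB.symm hE

end Intertwining

lemma map_fourierLp_of_ae_eq_zz_sq_mul {M : L2T → L2T}
    (hM : ∀ f : L2T, M f =ᵐ[hm] fun x => zz x ^ 2 * (f : UnitCircle → ℂ) x) (n : ℤ) :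
    M (fourierLp 2 n) = fourierLp 2 (n + 2) := by
  apply Lp.ext
  filter_upwards [hM (fourierLp 2 n), coeFn_fourierLp 2 n, coeFn_fourierLp 2 (n + 2)]
    with x h h₁ h₂
  rw [h, h₁, h₂, zz_sq, fourier_add, mul_comm]

lemma ae_eq_conj_zz_sq_mul_of_ae_eq_mul2 {C : L2T → L2T} {φ₁ φ₂ : UnitCircle → ℂ}
    (hrep : ∀ f : L2T,
      C f =ᵐ[hm] mul2 φ₁ φ₂ fun y => zz y * conj ((f : UnitCircle → ℂ) y))
    {f g : L2T} (hg : g =ᵐ[hm] fun x => zz x ^ 2 * (f : UnitCircle → ℂ) x) :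
    C g =ᵐ[hm] fun x => conj (zz x) ^ 2 * C f x := by
  filter_upwards [hrep g, hrep f, hg, ae_comp_add_pi hg] with x h₁ h₂ h₃ h₄
  simp only [h₁, h₂, mul2, evenPart, oddPart, h₃, h₄, zz_add_pi, map_mul, map_pow, map_neg]
  ring

/-- Characterization of conjugations `C` with `C M_{z²} = M_{z̄²} C`:
`C = M_{[φ₁,φ₂]} ∘ C_{z²}` with `|φ₁|² + |φ₂|² = 2` and `φ₁^e = φ₂^e`;
conversely any conjugation of this form intertwines `M_{z²}` and `M_{z̄²}`. -/
theorem stmt_10 (Mz2 Mzb2 : L2T →L[ℂ] L2T)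
    (hMz2 : ∀ f : L2T, (Mz2 f : UnitCircle → ℂ) =ᵐ[hm]
      fun x => zz x ^ 2 * (f : UnitCircle → ℂ) x)
    (hMzb2 : ∀ f : L2T, (Mzb2 f : UnitCircle → ℂ) =ᵐ[hm]
      fun x => (starRingEnd ℂ) (zz x) ^ 2 * (f : UnitCircle → ℂ) x)
    (C : L2T → L2T) (hC : IsConjugation C) :
    ((∀ f, C (Mz2 f) = Mzb2 (C f)) →
      ∃ φ1 φ2 : UnitCircle → ℂ, MemLp φ1 ⊤ hm ∧ MemLp φ2 ⊤ hm ∧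
        (∀ᵐ x ∂hm, ‖φ1 x‖ ^ 2 + ‖φ2 x‖ ^ 2 = 2) ∧
        (∀ᵐ x ∂hm, evenPart φ1 x = evenPart φ2 x) ∧
        ∀ f : L2T, (C f : UnitCircle → ℂ) =ᵐ[hm]
          mul2 φ1 φ2 (fun y => zz y * (starRingEnd ℂ) ((f : UnitCircle → ℂ) y))) ∧
    ((∃ φ1 φ2 : UnitCircle → ℂ, MemLp φ1 ⊤ hm ∧ MemLp φ2 ⊤ hm ∧
        ∀ f : L2T, (C f : UnitCircle → ℂ) =ᵐ[hm]
          mul2 φ1 φ2 (fun y => zz y * (starRingEnd ℂ) ((f : UnitCircle → ℂ) y))) →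
      ∀ f, C (Mz2 f) = Mzb2 (C f)) := by
  refine ⟨fun hcomm => ?_, fun ⟨φ1, φ2, _, _, hrep⟩ f => ?_⟩
  · have hshift : ∀ n, C (fourierLp 2 (n + 2)) =ᵐ[hm]
        fun x => fourier (-2) x * C (fourierLp 2 n) x := fun n => by
      rw [← map_fourierLp_of_ae_eq_zz_sq_mul hMz2, hcomm]
      filter_upwards [hMzb2 (C (fourierLp 2 n))] with x hx
      rw [hx, conj_zz_sq]
    have hnorm := norm_symbolEven_sq_add_norm_symbolOdd_sq hshift hC
    refine ⟨symbolEven C, symbolOdd C, ?_, ?_, hnorm, evenPart_symbolEven_ae_eq hshift hC,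
      ae_eq_mul2_symbol hshift hC⟩
    · exact memLp_top_of_norm_sq_add_norm_sq_eq (Lp.aestronglyMeasurable _) hnorm
    · exact memLp_top_of_norm_sq_add_norm_sq_eq (memLp_symbolOdd C).1
        (hnorm.mono fun x hx => (add_comm _ _).trans hx)
  · exact Lp.ext ((ae_eq_conj_zz_sq_mul_of_ae_eq_mul2 hrep (hMz2 f)).trans (hMzb2 (C f)).symm)
end
end

section
/- There is no conjugation C on L²(𝕋) such that C M_{z^n} C = M_{\bar{z}^n} (i.e., M_{z^n} is C-symmetric) and C(H²) ⊆ H², for any n ≥ 1. -/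
open MeasureTheory Complex
open scoped Real

noncomputable section

lemma zz_pow (m : ℕ) (x : UnitCircle) : zz x ^ m = fourier (m : ℤ) x := by
  induction m with
  | zero => simp
  | succ k ih =>
    rw [pow_succ, ih, zz, ← fourier_add]
    push_cast
    ring_nf

lemma conj_zz_pow (m : ℕ) (x : UnitCircle) :
    (starRingEnd ℂ) (zz x) ^ m = fourier (-(m : ℤ)) x := by
  rw [← map_pow, zz_pow, ← fourier_neg]

lemma fourierLp_natCast_mem_hardy (k : ℕ) : (fourierLp 2 (k : ℤ) : L2T) ∈ Hardy :=
  Submodule.le_topologicalClosure _ (Submodule.subset_span ⟨k, rfl⟩)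

lemma fourierLp_notMem_hardy {k : ℤ} (hk : k < 0) : (fourierLp 2 k : L2T) ∉ Hardy := by
  intro hmem
  have hfourier := orthonormal_iff_ite.mp (orthonormal_fourier (T := 2 * Real.pi))
  have hperp : Hardy ≤ (ℂ ∙ (fourierLp 2 k : L2T))ᗮ := by
    refine Submodule.topologicalClosure_minimal _ ?_ (Submodule.isClosed_orthogonal _)
    refine Submodule.span_le.2 ?_
    rintro _ ⟨m, rfl⟩
    rw [SetLike.mem_coe, Submodule.mem_orthogonal_singleton_iff_inner_right, hfourier,
      if_neg (by omega)]
  have hself := Submodule.mem_orthogonal_singleton_iff_inner_right.mp (hperp hmem)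
  rw [hfourier, if_pos rfl] at hself
  exact one_ne_zero hself

lemma fourierLp_shift_of_mul_fourier {T : L2T →L[ℂ] L2T} {m : ℤ}
    (hT : ∀ f : L2T, (T f : UnitCircle → ℂ) =ᵐ[hm] fun x => fourier m x * f x) (k : ℤ) :
    T (fourierLp 2 k) = fourierLp 2 (m + k) := by
  apply Lp.ext
  filter_upwards [hT (fourierLp 2 k), coeFn_fourierLp 2 k, coeFn_fourierLp 2 (m + k)]
    with x hTx hk hmk
  rw [hTx, hmk, hk, fourier_add]

lemma mem_hardy_of_map_fourierLp_mem {T : L2T →L[ℂ] L2T}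
    (hT : ∀ k : ℕ, T (fourierLp 2 (k : ℤ)) ∈ Hardy) {f : L2T} (hf : f ∈ Hardy) :
    T f ∈ Hardy := by
  suffices Hardy.map (T : L2T →ₗ[ℂ] L2T) ≤ Hardy from this (Submodule.mem_map_of_mem hf)
  refine (Submodule.topologicalClosure_map T _).trans ?_
  rw [Submodule.map_span]
  refine Submodule.topologicalClosure_minimal _ (Submodule.span_le.2 ?_)
    (Submodule.isClosed_topologicalClosure _)
  rintro _ ⟨_, ⟨k, rfl⟩, rfl⟩
  exact hT k

/-- For `n ≥ 1`, there is no conjugation `C` making `M_{z^n}` `C`-symmetric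
(`C M_{z^n} C = M_{z̄^n}`) with `C(H²) ⊆ H²`. -/
theorem stmt_19 (n : ℕ) (hn : 1 ≤ n) (Mzn Mznb : L2T →L[ℂ] L2T)
    (hMzn : ∀ f : L2T, (Mzn f : UnitCircle → ℂ) =ᵐ[hm]
      fun x => zz x ^ n * (f : UnitCircle → ℂ) x)
    (hMznb : ∀ f : L2T, (Mznb f : UnitCircle → ℂ) =ᵐ[hm]
      fun x => (starRingEnd ℂ) (zz x) ^ n * (f : UnitCircle → ℂ) x) :
    ¬ ∃ C : L2T → L2T, IsConjugation C ∧ (∀ f, C (Mzn (C f)) = Mznb f) ∧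
      ∀ f : L2T, f ∈ Hardy → C f ∈ Hardy := by
  rintro ⟨C, -, hsym, hH⟩
  have hMzn_shift := fourierLp_shift_of_mul_fourier (m := n) fun f => by
    simpa only [zz_pow] using hMzn f
  have hMznb_shift := fourierLp_shift_of_mul_fourier (m := -n) fun f => by
    simpa only [conj_zz_pow] using hMznb f
  have hMzn_hardy : ∀ f ∈ Hardy, Mzn f ∈ Hardy := fun f =>
    mem_hardy_of_map_fourierLp_mem fun k => by
      rw [hMzn_shift]
      exact_mod_cast fourierLp_natCast_mem_hardy (n + k)
  -- `C` maps `H²` into itself and `M_{z^n}` preserves it, so `z̄^n = C M_{z^n} C 1` would lie in `H²`.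
  have hmem : (fourierLp 2 (-n : ℤ) : L2T) ∈ Hardy := by
    rw [← add_zero (-n : ℤ), ← hMznb_shift, ← hsym]
    exact hH _ (hMzn_hardy _ (hH _ (fourierLp_natCast_mem_hardy 0)))
  exact fourierLp_notMem_hardy (by omega) hmem
end
end
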